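/- arXiv:1902.07187 — 4 statements merged into one kernel-verified Lean document; each statement's English description precedes it below -/
import Mathlib

section
/- If λ_n > 0 for every user n ∈ {1,…,N}, then the spectral radius of the propagation matrix satisfies ρ(A) < 1. -/
open Matrix Finset Filter

/-- Spectral radius of a real square matrix: the maximum of `|z|` over the
complex eigenvalues `z` (roots of the characteristic polynomial over `ℂ`). -/
noncomputable def specRad (N : ℕ) (T : Matrix (Fin N) (Fin N) ℝ) : ℝ :=
  sSup {r : ℝ | ∃ z : ℂ, ((T.map Complex.ofReal).charpoly).IsRoot z ∧ r = ‖z‖}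

/-- The propagation matrix `A`. -/
noncomputable def propA (N : ℕ) (L : Fin N → Finset (Fin N)) (lam mu : Fin N → ℝ) :
    Matrix (Fin N) (Fin N) ℝ :=
  Matrix.of fun j k => if k ∈ L j then mu k / (∑ l ∈ L j, (lam l + mu l)) else 0

/-- The vector `b_i`. -/
noncomputable def bvec (N : ℕ) (L : Fin N → Finset (Fin N)) (lam mu : Fin N → ℝ)
    (i : Fin N) : Fin N → ℝ :=
  fun j => if i ∈ L j then lam i / (∑ l ∈ L j, (lam l + mu l)) else 0

/-- The diagonal matrix `C`. -/
noncomputable def Cmat (N : ℕ) (lam mu : Fin N → ℝ) : Matrix (Fin N) (Fin N) ℝ :=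
  Matrix.diagonal fun j => mu j / (lam j + mu j)

/-- The vector `d_i`. -/
noncomputable def dvec (N : ℕ) (lam mu : Fin N → ℝ) (i : Fin N) : Fin N → ℝ :=
  fun j => if j = i then lam i / (lam i + mu i) else 0

/-! Each row of `A` is nonnegative with sum `∑_{L j} μ / ∑_{L j} (λ + μ)`, which is `< 1` because
every `λ` is positive. By Gershgorin's circle theorem every eigenvalue has modulus at most some
absolute row sum, hence less than `1`; as there are finitely many eigenvalues, so is their maximum. -/

theorem Matrix.exists_norm_le_sum_norm_of_isRoot_charpoly {K n : Type*} [NormedField K]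
    [Fintype n] [DecidableEq n] {A : Matrix n n K} {μ : K} (hμ : A.charpoly.IsRoot μ) :
    ∃ k, ‖μ‖ ≤ ∑ j, ‖A k j‖ := by
  have hEig : Module.End.HasEigenvalue (Matrix.toLin' A) μ := by
    rwa [Module.End.hasEigenvalue_iff_isRoot_charpoly, Matrix.charpoly_toLin']
  obtain ⟨k, hk⟩ := eigenvalue_mem_ball hEig
  refine ⟨k, ?_⟩
  calc ‖μ‖ ≤ ‖A k k‖ + ‖μ - A k k‖ := norm_le_norm_add_norm_sub' μ (A k k)
    _ ≤ ‖A k k‖ + ∑ j ∈ univ.erase k, ‖A k j‖ := by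
      rw [← dist_eq_norm]
      exact add_le_add_right (Metric.mem_closedBall.1 hk) _
    _ = ∑ j, ‖A k j‖ := Finset.add_sum_erase _ (fun j => ‖A k j‖) (mem_univ k)

/-- For `N = 0` there are no eigenvalues and `specRad` is the junk value `sSup ∅ = 0`. -/
theorem specRad_lt_of_sum_abs_row_lt {N : ℕ} (M : Matrix (Fin N) (Fin N) ℝ) {c : ℝ}
    (hc : 0 < c) (hrow : ∀ j, ∑ k, |M j k| < c) : specRad N M < c := by
  set S := {r : ℝ | ∃ z : ℂ, ((M.map Complex.ofReal).charpoly).IsRoot z ∧ r = ‖z‖}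
  change sSup S < c
  rcases S.eq_empty_or_nonempty with hS | hS
  · rwa [hS, Real.sSup_empty]
  have hfin : S.Finite := by
    have hroots := Polynomial.finite_setOfPred_isRoot (M.map Complex.ofReal).charpoly_monic.ne_zero
    refine (hroots.image (‖·‖)).subset ?_
    rintro r ⟨z, hz, rfl⟩
    exact ⟨z, hz, rfl⟩
  obtain ⟨z, hz, hsup⟩ := hS.csSup_mem hfin
  obtain ⟨k, hk⟩ := Matrix.exists_norm_le_sum_norm_of_isRoot_charpoly hz
  simp only [map_apply, Complex.norm_real, Real.norm_eq_abs] at hk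
  rw [hsup]
  exact hk.trans_lt (hrow k)

section propA

variable {N : ℕ} {L : Fin N → Finset (Fin N)} {lam mu : Fin N → ℝ}

theorem sum_propA_row (j : Fin N) :
    ∑ k, propA N L lam mu j k = (∑ k ∈ L j, mu k) / ∑ l ∈ L j, (lam l + mu l) := by
  simp only [propA, of_apply]
  rw [Finset.sum_ite_mem, Finset.univ_inter, Finset.sum_div]

theorem propA_nonneg (hlam : ∀ n, 0 ≤ lam n) (hmu : ∀ n, 0 ≤ mu n) (j k : Fin N) :
    0 ≤ propA N L lam mu j k := by
  simp only [propA, of_apply]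
  split_ifs
  · exact div_nonneg (hmu k) (Finset.sum_nonneg fun l _ => add_nonneg (hlam l) (hmu l))
  · exact le_rfl

/-- A row with no leaders is zero, since `x / 0 = 0`. -/
theorem sum_abs_propA_row_lt_one (hlam : ∀ n, 0 < lam n) (hmu : ∀ n, 0 ≤ mu n) (j : Fin N) :
    ∑ k, |propA N L lam mu j k| < 1 := by
  have hnonneg := propA_nonneg (L := L) (fun n => (hlam n).le) hmu j
  simp_rw [abs_of_nonneg (hnonneg _), sum_propA_row]
  rcases (L j).eq_empty_or_nonempty with hL | hL
  · simp [hL]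
  have hlt : ∑ k ∈ L j, mu k < ∑ l ∈ L j, (lam l + mu l) :=
    Finset.sum_lt_sum_of_nonempty hL fun l _ => lt_add_of_pos_left _ (hlam l)
  exact (div_lt_one ((Finset.sum_nonneg fun k _ => hmu k).trans_lt hlt)).2 hlt

end propA

theorem stmt2_general (N : ℕ) (L : Fin N → Finset (Fin N))
    (lam mu : Fin N → ℝ)
    (hlam : ∀ n, 0 < lam n) (hmu : ∀ n, 0 ≤ mu n) :
    specRad N (propA N L lam mu) < 1 :=
  specRad_lt_of_sum_abs_row_lt _ one_pos (sum_abs_propA_row_lt_one hlam hmu)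

/-- if `λ_n > 0` for every user `n`, then `ρ(A) < 1`. -/
theorem stmt2 (N : ℕ) (hN : 1 ≤ N) (L : Fin N → Finset (Fin N))
    (hL : ∀ j, (L j).Nonempty) (lam mu : Fin N → ℝ)
    (hlam : ∀ n, 0 < lam n) (hmu : ∀ n, 0 ≤ mu n)
    (hpos : ∀ n, 0 < lam n + mu n) :
    specRad N (propA N L lam mu) < 1 :=
  stmt2_general N L lam mu hlam hmu
end

section
/- Suppose that for every user j there exists a leader k ∈ L(j) with μ_k > 0, and that for every directed cycle in the Leader-graph (i.e., every finite sequence of users n_1, n_2, …, n_γ, n_{γ+1} = n_1 with γ ≥ 1 and n_t ∈ L(n_{t+1}) for each t) at least one participating user n_t has a leader k ∈ L(n_t) with λ_k > 0. Then the spectral radius of the propagation matrix satisfies ρ(A) < 1. -/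
/-!
Suppose `A v = z v` with `v ≠ 0` and `‖z‖ ≥ 1`. `A` is entrywise nonnegative with row sums
`(∑_{k ∈ L j} μ_k) / (∑_{k ∈ L j} (λ_k + μ_k)) ≤ 1`, so at a coordinate `j` where `‖v j‖` is
maximal the triangle inequality `‖v j‖ ≤ ‖z‖ ‖v j‖ ≤ ∑_k A_{jk} ‖v k‖ ≤ ‖v j‖` is tight: the
row of `j` sums to one, i.e. no leader of `j` self-posts, and `‖v k‖` is maximal for every
leader `k` of `j` with `μ_k > 0`. Following such leaders inside the finite set of maximal
coordinates eventually closes a cycle of the Leader-graph on which no user has a self-posting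
leader, contradicting the cycle hypothesis.
-/

open Matrix Finset Filter

theorem Matrix.exists_mulVec_eq_smul_of_isRoot_charpoly {K n : Type*} [Field K] [Fintype n]
    [DecidableEq n] (B : Matrix n n K) {z : K} (hz : B.charpoly.IsRoot z) :
    ∃ v ≠ 0, B *ᵥ v = z • v := by
  rw [← Matrix.charpoly_toLin', ← Module.End.hasEigenvalue_iff_isRoot_charpoly] at hz
  obtain ⟨v, hv⟩ := hz.exists_hasEigenvector
  exact ⟨v, hv.2, by simpa using hv.apply_eq_smul⟩

theorem specRad_lt_of_forall_norm_lt {N : ℕ} (T : Matrix (Fin N) (Fin N) ℝ) {r : ℝ} (hr : 0 < r)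
    (h : ∀ z : ℂ, (T.map Complex.ofReal).charpoly.IsRoot z → ‖z‖ < r) : specRad N T < r := by
  set p := (T.map Complex.ofReal).charpoly
  set E := {r : ℝ | ∃ z : ℂ, p.IsRoot z ∧ r = ‖z‖}
  rcases E.eq_empty_or_nonempty with hE | hE
  · change sSup E < r
    rwa [hE, Real.sSup_empty]
  have hfin : E.Finite :=
    ((Polynomial.finite_setOfPred_isRoot (charpoly_monic _).ne_zero).image (‖·‖)).subset
      (by rintro _ ⟨z, hz, rfl⟩; exact ⟨z, hz, rfl⟩)
  exact (hfin.csSup_lt_iff hE).2 (by rintro _ ⟨z, hz, rfl⟩; exact h z hz)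

theorem Matrix.sum_row_eq_one_and_norm_eq_of_mulVec_eq_smul {n : Type*} [Fintype n]
    {A : Matrix n n ℝ} (hA : ∀ j k, 0 ≤ A j k) (hrow : ∀ j, ∑ k, A j k ≤ 1)
    {v : n → ℂ} {z : ℂ} (hv0 : v ≠ 0) (hv : A.map Complex.ofReal *ᵥ v = z • v) (hz : 1 ≤ ‖z‖)
    {j : n} (hmax : ∀ k, ‖v k‖ ≤ ‖v j‖) :
    ∑ k, A j k = 1 ∧ ∀ k, 0 < A j k → ‖v k‖ = ‖v j‖ := by
  set M := ‖v j‖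
  have hM : 0 < M := by
    obtain ⟨i, hi⟩ := Function.ne_iff.1 hv0
    exact (norm_pos_iff.2 hi).trans_le (hmax i)
  have hlower : M ≤ ∑ k, A j k * ‖v k‖ :=
    calc M ≤ ‖z‖ * M := le_mul_of_one_le_left hM.le hz
      _ = ‖∑ k, (A j k : ℂ) * v k‖ := by
        rw [← norm_mul, ← smul_eq_mul, ← Pi.smul_apply, ← hv]; rfl
      _ ≤ ∑ k, ‖(A j k : ℂ) * v k‖ := norm_sum_le _ _
      _ = ∑ k, A j k * ‖v k‖ := by
        simp only [norm_mul, Complex.norm_real, Real.norm_of_nonneg (hA j _)]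
  have hupper : ∑ k, A j k * ‖v k‖ ≤ (∑ k, A j k) * M := by
    rw [sum_mul]
    exact sum_le_sum fun k _ => mul_le_mul_of_nonneg_left (hmax k) (hA j k)
  have hsum : ∑ k, A j k = 1 :=
    le_antisymm (hrow j) (le_of_mul_le_mul_right (by linarith) hM)
  have hgap : ∑ k, A j k * (M - ‖v k‖) = 0 := by
    have : ∑ k, A j k * (M - ‖v k‖) = (∑ k, A j k) * M - ∑ k, A j k * ‖v k‖ := by
      simp only [mul_sub, sum_sub_distrib, sum_mul]
    rw [hsum, one_mul] at hupper this
    linarith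
  refine ⟨hsum, fun k hk => ?_⟩
  have := (sum_eq_zero_iff_of_nonneg fun i _ =>
    mul_nonneg (hA j i) (sub_nonneg.2 (hmax i))).1 hgap k (mem_univ k)
  linarith [(mul_eq_zero.1 this).resolve_left hk.ne']

theorem exists_cycle_of_forall_exists_rel {α : Type*} [Finite α] {R : α → α → Prop}
    {S : Set α} (hS : S.Nonempty) (h : ∀ j ∈ S, ∃ k ∈ S, R k j) :
    ∃ γ, 1 ≤ γ ∧ ∃ n : ℕ → α, n γ = n 0 ∧ (∀ t < γ, R (n t) (n (t + 1))) ∧ ∀ t, n t ∈ S := by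
  choose f hfS hfR using h
  let g : S → S := fun j => ⟨f j j.2, hfS j j.2⟩
  let m : ℕ → S := fun t => g^[t] ⟨hS.some, hS.some_mem⟩
  obtain ⟨a, b, hab, heq⟩ : ∃ a b, a < b ∧ m a = m b := by
    obtain ⟨a, b, hne, heq⟩ := Finite.exists_ne_map_eq_of_infinite m
    rcases hne.lt_or_gt with h | h
    exacts [⟨a, b, h, heq⟩, ⟨b, a, h, heq.symm⟩]
  refine ⟨b - a, by omega, fun t => m (b - t), ?_, fun t ht => ?_, fun t => (m (b - t)).2⟩
  · simp [Nat.sub_sub_self hab.le, heq]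
  · have hsucc : b - t = b - (t + 1) + 1 := by omega
    simp only [hsucc, m, Function.iterate_succ_apply']
    exact hfR _ _

section propA

variable {N : ℕ} {L : Fin N → Finset (Fin N)} {lam mu : Fin N → ℝ}

theorem propA_pos (hlam : ∀ n, 0 ≤ lam n) (hmu : ∀ n, 0 ≤ mu n) {j k : Fin N} (hk : k ∈ L j)
    (hmuk : 0 < mu k) : 0 < propA N L lam mu j k := by
  have hD : lam k + mu k ≤ ∑ l ∈ L j, (lam l + mu l) :=
    single_le_sum (fun l _ => add_nonneg (hlam l) (hmu l)) hk
  simp only [propA, of_apply, hk, if_true]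
  exact div_pos hmuk (by linarith [hlam k])

theorem sum_propA_row_le_one (hlam : ∀ n, 0 ≤ lam n) (hmu : ∀ n, 0 ≤ mu n) (j : Fin N) :
    ∑ k, propA N L lam mu j k ≤ 1 := by
  rw [sum_propA_row]
  exact div_le_one_of_le₀ (sum_le_sum fun k _ => le_add_of_nonneg_left (hlam k))
    (sum_nonneg fun l _ => add_nonneg (hlam l) (hmu l))

theorem lam_eq_zero_of_sum_propA_row_eq_one (hlam : ∀ n, 0 ≤ lam n) {j : Fin N}
    (h : ∑ k, propA N L lam mu j k = 1) : ∀ k ∈ L j, lam k = 0 := by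
  rw [sum_propA_row] at h
  have hD : ∑ l ∈ L j, (lam l + mu l) ≠ 0 := by
    rintro hD
    rw [hD, div_zero] at h
    exact zero_ne_one h
  rw [div_eq_one_iff_eq hD, sum_add_distrib] at h
  exact (sum_eq_zero_iff_of_nonneg fun l _ => hlam l).1 (by linarith)

end propA

theorem stmt3_general (N : ℕ) (L : Fin N → Finset (Fin N))
    (lam mu : Fin N → ℝ)
    (hlam : ∀ n, 0 ≤ lam n) (hmu : ∀ n, 0 ≤ mu n)
    (hmuL : ∀ j, ∃ k ∈ L j, 0 < mu k)
    (hcycle : ∀ (γ : ℕ), 1 ≤ γ → ∀ n : ℕ → Fin N, n γ = n 0 →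
      (∀ t < γ, n t ∈ L (n (t + 1))) → ∃ t < γ, ∃ k ∈ L (n t), 0 < lam k) :
    specRad N (propA N L lam mu) < 1 := by
  refine specRad_lt_of_forall_norm_lt _ one_pos fun z hz => ?_
  by_contra! hz1
  obtain ⟨v, hv0, hv⟩ := exists_mulVec_eq_smul_of_isRoot_charpoly _ hz
  have htight (j : Fin N) (hj : ∀ k, ‖v k‖ ≤ ‖v j‖) :=
    sum_row_eq_one_and_norm_eq_of_mulVec_eq_smul (propA_nonneg hlam hmu)
      (sum_propA_row_le_one hlam hmu) hv0 hv hz1 hj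
  let S : Set (Fin N) := {j | ∀ k, ‖v k‖ ≤ ‖v j‖}
  have hS : S.Nonempty := by
    have : Nonempty (Fin N) := ⟨(Function.ne_iff.1 hv0).choose⟩
    exact Finite.exists_max fun j => ‖v j‖
  obtain ⟨γ, hγ, n, hn0, hedge, hnS⟩ := exists_cycle_of_forall_exists_rel (R := (· ∈ L ·)) hS
    fun j hj => by
      obtain ⟨k, hk, hmuk⟩ := hmuL j
      refine ⟨k, fun i => ?_, hk⟩
      rw [(htight j hj).2 k (propA_pos hlam hmu hk hmuk)]
      exact hj i
  obtain ⟨t, -, k, hk, hlamk⟩ := hcycle γ hγ n hn0 hedge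
  exact hlamk.ne' (lam_eq_zero_of_sum_propA_row_eq_one hlam (htight _ (hnS t)).1 k hk)

/-- if every user has a leader with positive re-post rate, and for
every directed cycle of the Leader-graph at least one participating user has a
leader with positive self-post rate, then `ρ(A) < 1`. -/
theorem stmt3 (N : ℕ) (hN : 1 ≤ N) (L : Fin N → Finset (Fin N))
    (hL : ∀ j, (L j).Nonempty) (lam mu : Fin N → ℝ)
    (hlam : ∀ n, 0 ≤ lam n) (hmu : ∀ n, 0 ≤ mu n)
    (hpos : ∀ n, 0 < lam n + mu n)
    (hmuL : ∀ j, ∃ k ∈ L j, 0 < mu k)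
    (hcycle : ∀ (γ : ℕ), 1 ≤ γ → ∀ n : ℕ → Fin N, n γ = n 0 →
      (∀ t < γ, n t ∈ L (n (t + 1))) → ∃ t < γ, ∃ k ∈ L (n t), 0 < lam k) :
    specRad N (propA N L lam mu) < 1 :=
  stmt3_general N L lam mu hlam hmu hmuL hcycle
end

section
/- Suppose ρ(A) < 1, and for each user i let p_i = (I_N − A)^{-1} b_i. Then for every user n, Σ_{i=1}^N (p_i)_n = 1; that is, the Newsfeed steady-state probabilities over all post origins i sum to one on every Newsfeed n. -/
open Matrix Finset Filter

/- The vectors `b_i` and the rows of `A` split each row's normalising sum `Σ_{ℓ ∈ L(j)} (λ_ℓ + μ_ℓ)`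
into its self-post and re-post parts, so `Σ_i b_i = (I - A) 1`. Since `ρ(A) < 1`, the number `1`
is not an eigenvalue of `A`, so `I - A` is invertible and `Σ_i p_i = (I - A)⁻¹ (I - A) 1 = 1`. -/

lemma isRoot_one_charpoly_map_iff {n R S : Type*} [Fintype n] [DecidableEq n]
    [CommRing R] [CommRing S] (f : R →+* S) (hf : Function.Injective f) (T : Matrix n n R) :
    (T.map f).charpoly.IsRoot 1 ↔ (1 - T).det = 0 := by
  rw [charpoly_map, Polynomial.IsRoot, Polynomial.eval_one_map, eval_charpoly, map_one,
    map_eq_zero_iff f hf]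

lemma norm_le_specRad_of_isRoot {N : ℕ} {T : Matrix (Fin N) (Fin N) ℝ} {z : ℂ}
    (hz : (T.map Complex.ofReal).charpoly.IsRoot z) : ‖z‖ ≤ specRad N T := by
  have hroots : {z : ℂ | (T.map Complex.ofReal).charpoly.IsRoot z}.Finite :=
    Polynomial.finite_setOfPred_isRoot (T.map Complex.ofReal).charpoly_monic.ne_zero
  refine le_csSup ((hroots.image (‖·‖)).bddAbove.mono ?_) ⟨z, hz, rfl⟩
  rintro r ⟨w, hw, rfl⟩
  exact ⟨w, hw, rfl⟩

lemma det_one_sub_ne_zero_of_specRad_lt_one {N : ℕ} {T : Matrix (Fin N) (Fin N) ℝ}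
    (hT : specRad N T < 1) : (1 - T).det ≠ 0 := by
  intro hdet
  have hroot := (isRoot_one_charpoly_map_iff Complex.ofRealHom Complex.ofReal_injective T).2 hdet
  have hle := norm_le_specRad_of_isRoot hroot
  rw [norm_one] at hle
  linarith

section Propagation

variable {N : ℕ} {L : Fin N → Finset (Fin N)} {lam mu : Fin N → ℝ}

lemma sum_bvec_apply_add_sum_propA_apply (hden : ∀ j, ∑ l ∈ L j, (lam l + mu l) ≠ 0)
    (j : Fin N) : ∑ i, bvec N L lam mu i j + ∑ k, propA N L lam mu j k = 1 := by
  simp only [bvec, propA, of_apply]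
  rw [sum_ite_mem, sum_ite_mem, univ_inter, ← sum_div, ← sum_div, ← add_div,
    ← sum_add_distrib, div_self (hden j)]

lemma sum_bvec_eq_one_sub_propA_mulVec_one (hden : ∀ j, ∑ l ∈ L j, (lam l + mu l) ≠ 0) :
    ∑ i, bvec N L lam mu i = (1 - propA N L lam mu) *ᵥ 1 := by
  ext j
  have hrow := sum_bvec_apply_add_sum_propA_apply hden j
  rw [sub_mulVec, one_mulVec, Pi.sub_apply, Pi.one_apply, Finset.sum_apply]
  simp only [mulVec, dotProduct, Pi.one_apply, mul_one]
  linarith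

end Propagation

theorem stmt10_general (N : ℕ) (L : Fin N → Finset (Fin N))
    (hL : ∀ j, (L j).Nonempty) (lam mu : Fin N → ℝ)
    (hpos : ∀ n, 0 < lam n + mu n)
    (hrho : specRad N (propA N L lam mu) < 1) :
    ∀ n : Fin N,
      ∑ i, (1 - propA N L lam mu)⁻¹.mulVec (bvec N L lam mu i) n = 1 := by
  intro n
  have hden : ∀ j, ∑ l ∈ L j, (lam l + mu l) ≠ 0 :=
    fun j => (sum_pos (fun l _ => hpos l) (hL j)).ne'
  have : Invertible (1 - propA N L lam mu) :=
    invertibleOfIsUnitDet _ (isUnit_iff_ne_zero.2 (det_one_sub_ne_zero_of_specRad_lt_one hrho))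
  rw [← Finset.sum_apply, ← mulVec_sum,
    inv_mulVec_eq_vec (sum_bvec_eq_one_sub_propA_mulVec_one hden)]
  rfl

/-- if `ρ(A) < 1` and `p_i = (I - A)⁻¹ b_i`, then for every user
`n` the Newsfeed probabilities sum to one: `Σ_i (p_i)_n = 1`. -/
theorem stmt10 (N : ℕ) (hN : 1 ≤ N) (L : Fin N → Finset (Fin N))
    (hL : ∀ j, (L j).Nonempty) (lam mu : Fin N → ℝ)
    (hlam : ∀ n, 0 ≤ lam n) (hmu : ∀ n, 0 ≤ mu n)
    (hpos : ∀ n, 0 < lam n + mu n)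
    (hrho : specRad N (propA N L lam mu) < 1) :
    ∀ n : Fin N,
      ∑ i, (1 - propA N L lam mu)⁻¹.mulVec (bvec N L lam mu i) n = 1 :=
  stmt10_general N L hL lam mu hpos hrho
end

section
/- Suppose ρ(A) < 1, and for each user i let q_i = C (I_N − A)^{-1} b_i + d_i. Then for every user n, Σ_{i=1}^N (q_i)_n = 1; that is, the Wall steady-state probabilities over all post origins i sum to one on every Wall n. -/
open Matrix Finset Filter

/-!
For `k ∈ L(j)` we have `A_{jk} + (b_k)_j = (λ_k + μ_k) / Σ_{ℓ ∈ L(j)} (λ_ℓ + μ_ℓ)`, so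
`A 𝟙 + Σ_i b_i = 𝟙`, i.e. `Σ_i b_i = (I - A) 𝟙`. Since `ρ(A) < 1`, `1` is not an eigenvalue
and `I - A` is invertible, hence `(I - A)⁻¹ Σ_i b_i = 𝟙`. Summing `q_i` over `i` therefore
leaves `C 𝟙 + Σ_i d_i`, whose `n`-th entry is `μ_n/(λ_n+μ_n) + λ_n/(λ_n+μ_n) = 1`.
-/

lemma le_specRad_of_isRoot {N : ℕ} {T : Matrix (Fin N) (Fin N) ℝ} {z : ℂ}
    (hz : ((T.map Complex.ofReal).charpoly).IsRoot z) : ‖z‖ ≤ specRad N T := by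
  have hroots : {r : ℝ | ∃ z : ℂ, ((T.map Complex.ofReal).charpoly).IsRoot z ∧ r = ‖z‖} =
      (‖·‖) '' {z : ℂ | ((T.map Complex.ofReal).charpoly).IsRoot z} := by
    ext r; simp [eq_comm]
  refine le_csSup ?_ ⟨z, hz, rfl⟩
  rw [hroots]
  exact ((Polynomial.finite_setOfPred_isRoot (charpoly_monic _).ne_zero).image _).bddAbove

lemma isUnit_det_one_sub_of_specRad_lt_one {N : ℕ} {T : Matrix (Fin N) (Fin N) ℝ}
    (hT : specRad N T < 1) : IsUnit (1 - T).det := by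
  by_contra hdet
  rw [isUnit_iff_ne_zero, not_not] at hdet
  have hroot : ((T.map Complex.ofReal).charpoly).IsRoot 1 := by
    rw [Polynomial.IsRoot, show T.map Complex.ofReal = T.map Complex.ofRealHom from rfl,
      charpoly_map, Polynomial.eval_one_map, eval_charpoly, map_one, hdet, map_zero]
  have := le_specRad_of_isRoot hroot
  rw [norm_one] at this
  linarith

lemma propA_mulVec_one_add_sum_bvec {N : ℕ} {L : Fin N → Finset (Fin N)} {lam mu : Fin N → ℝ}
    (hS : ∀ j, ∑ l ∈ L j, (lam l + mu l) ≠ 0) :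
    propA N L lam mu *ᵥ 1 + ∑ i, bvec N L lam mu i = 1 := by
  funext j
  simp only [Pi.add_apply, Finset.sum_apply, mulVec, dotProduct, propA, bvec, of_apply,
    Pi.one_apply, mul_one, Finset.sum_ite_mem, Finset.univ_inter, ← Finset.sum_div,
    ← add_div, ← Finset.sum_add_distrib, add_comm (mu _), div_self (hS j)]

lemma Cmat_mulVec_one_add_sum_dvec {N : ℕ} {lam mu : Fin N → ℝ}
    (hpos : ∀ n, lam n + mu n ≠ 0) : Cmat N lam mu *ᵥ 1 + ∑ i, dvec N lam mu i = 1 := by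
  funext n
  simp [Cmat, dvec, mulVec_diagonal, Finset.sum_apply, ← add_div, add_comm (mu n),
    div_self (hpos n)]

lemma inv_one_sub_mulVec_sum_bvec {N : ℕ} {L : Fin N → Finset (Fin N)} {lam mu : Fin N → ℝ}
    (hS : ∀ j, ∑ l ∈ L j, (lam l + mu l) ≠ 0) (hA : IsUnit (1 - propA N L lam mu).det) :
    (1 - propA N L lam mu)⁻¹ *ᵥ ∑ i, bvec N L lam mu i = 1 := by
  have hsum : ∑ i, bvec N L lam mu i = (1 - propA N L lam mu) *ᵥ 1 := by
    rw [sub_mulVec, one_mulVec, eq_sub_iff_add_eq', propA_mulVec_one_add_sum_bvec hS]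
  rw [hsum, mulVec_mulVec, nonsing_inv_mul _ hA, one_mulVec]

theorem stmt11_general (N : ℕ) (L : Fin N → Finset (Fin N))
    (hL : ∀ j, (L j).Nonempty) (lam mu : Fin N → ℝ)
    (hpos : ∀ n, 0 < lam n + mu n)
    (hrho : specRad N (propA N L lam mu) < 1) :
    ∀ n : Fin N,
      ∑ i, ((Cmat N lam mu).mulVec
              ((1 - propA N L lam mu)⁻¹.mulVec (bvec N L lam mu i)) +
            dvec N lam mu i) n = 1 := by
  intro n
  have hS : ∀ j, ∑ l ∈ L j, (lam l + mu l) ≠ 0 := fun j =>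
    (Finset.sum_pos (fun l _ => hpos l) (hL j)).ne'
  have hsolve := inv_one_sub_mulVec_sum_bvec hS (isUnit_det_one_sub_of_specRad_lt_one hrho)
  rw [← Finset.sum_apply, Finset.sum_add_distrib, ← mulVec_sum, ← mulVec_sum, hsolve,
    Cmat_mulVec_one_add_sum_dvec fun n => (hpos n).ne', Pi.one_apply]

/-- if `ρ(A) < 1` and `q_i = C (I - A)⁻¹ b_i + d_i`, then for
every user `n` the Wall probabilities sum to one: `Σ_i (q_i)_n = 1`. -/
theorem stmt11 (N : ℕ) (hN : 1 ≤ N) (L : Fin N → Finset (Fin N))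
    (hL : ∀ j, (L j).Nonempty) (lam mu : Fin N → ℝ)
    (hlam : ∀ n, 0 ≤ lam n) (hmu : ∀ n, 0 ≤ mu n)
    (hpos : ∀ n, 0 < lam n + mu n)
    (hrho : specRad N (propA N L lam mu) < 1) :
    ∀ n : Fin N,
      ∑ i, ((Cmat N lam mu).mulVec
              ((1 - propA N L lam mu)⁻¹.mulVec (bvec N L lam mu i)) +
            dvec N lam mu i) n = 1 :=
  stmt11_general N L hL lam mu hpos hrho
end
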